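/- The complex conjugate of any stabilizer state |S⟩ equals ζ|S⟩ for some Pauli operator ζ that is a tensor product of I's and σ_z's (up to global phase). -/

import Mathlib

open Matrix
open scoped Classical

noncomputable def pauli : Fin 4 → Matrix (Fin 2) (Fin 2) ℂ :=
  ![1, !![0, 1; 1, 0], !![0, -Complex.I; Complex.I, 0], !![1, 0; 0, -1]]

noncomputable def pauliOp {n : ℕ} (f : Fin n → Fin 4) :
    Matrix (Fin n → Fin 2) (Fin n → Fin 2) ℂ :=
  fun x y => ∏ i, pauli (f i) (x i) (y i)

def pwt {n : ℕ} (f : Fin n → Fin 4) : ℕ :=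
  (Finset.univ.filter fun i => f i ≠ 0).card

def PauliGroup (n : ℕ) : Set (Matrix (Fin n → Fin 2) (Fin n → Fin 2) ℂ) :=
  {A | ∃ (k : Fin 4) (f : Fin n → Fin 4), A = Complex.I ^ (k : ℕ) • pauliOp f}

/-!
Every element of `S` is `±pauliOp f`, and entrywise conjugation multiplies `pauliOp f` by
`(-1)^(number of Y's in f)`. On `S` this sign is multiplicative and it is trivial on elements
without X-component (tensor products of I's and Z's contain no Y), so it factors through the
X-part of `f` in `𝔽₂ⁿ` and equals `(-1)^(a ⬝ x(f))` for some `a`. Conjugating by `ζ = Z^a`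
produces exactly this sign, so `ζ A ζ = conj A` for all `A ∈ S` and `ζ (conj ψ)` is again
stabilized by `S`. The average of the elements of `S` is an idempotent of trace one, whose range
contains every vector fixed by `S`; hence `ζ (conj ψ)` is a multiple `u ψ`, and conjugating
twice gives `‖u‖ = 1`.
-/

theorem AddChar.map_sum_eq_prod {A M ι : Type*} [AddCommMonoid A] [CommMonoid M]
    (ψ : AddChar A M) (s : Finset ι) (f : ι → A) : ψ (∑ i ∈ s, f i) = ∏ i ∈ s, ψ (f i) :=
  map_prod ψ.toMonoidHom (fun i => Multiplicative.ofAdd (f i)) s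

theorem RingHom.comp_mulVec {R S N : Type*} [Fintype N] [CommSemiring R] [CommSemiring S]
    (f : R →+* S) (M : Matrix N N R) (v : N → R) : f ∘ (M *ᵥ v) = M.map f *ᵥ (f ∘ v) :=
  funext (f.map_mulVec M v)

theorem Submodule.exists_linearMap_apply_fst_eq_snd {K E F : Type*} [DivisionRing K]
    [AddCommGroup E] [Module K E] [AddCommGroup F] [Module K F] (g : Submodule K (E × F))
    (hg : ∀ p ∈ g, p.1 = 0 → p.2 = 0) : ∃ φ : E →ₗ[K] F, ∀ p ∈ g, φ p.1 = p.2 := by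
  obtain ⟨φ, hφ⟩ := LinearMap.exists_extend g.toLinearPMap.toFun
  refine ⟨φ, fun p hp => ?_⟩
  rw [← g.toLinearPMap_graph_eq hg] at hp
  obtain ⟨y, hy₁, hy₂⟩ := (LinearPMap.mem_graph_iff _).1 hp
  rw [← hy₁, ← hy₂]
  exact LinearMap.congr_fun hφ y

theorem Finset.inv_card_smul_sum_const {α K M : Type*} [DivisionSemiring K] [AddCommMonoid M]
    [Module K M] {T : Finset α} (hT : (T.card : K) ≠ 0) (x : M) :
    (T.card : K)⁻¹ • ∑ _a ∈ T, x = x := by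
  rw [Finset.sum_const, ← Nat.cast_smul_eq_nsmul K, smul_smul, inv_mul_cancel₀ hT, one_smul]

theorem mul_sum_eq_sum_of_mul_self_eq_one {R : Type*} [Semiring R] {T : Finset R}
    (hmul : ∀ A ∈ T, ∀ B ∈ T, A * B ∈ T) (hsq : ∀ A ∈ T, A * A = 1) {A : R} (hA : A ∈ T) :
    A * ∑ B ∈ T, B = ∑ B ∈ T, B := by
  have hinv : ∀ B, A * (A * B) = B := fun B => by rw [← mul_assoc, hsq A hA, one_mul]
  rw [Finset.mul_sum]
  exact Finset.sum_nbij' (A * ·) (A * ·) (fun B hB => hmul A hA B hB)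
    (fun B hB => hmul A hA B hB) (fun B _ => hinv B) (fun B _ => hinv B) (fun B _ => hinv B ▸ rfl)

namespace Matrix

section PiKron

variable {ι κ R : Type*} [Fintype ι]

def piKron [CommMonoid R] (M : ι → Matrix κ κ R) : Matrix (ι → κ) (ι → κ) R :=
  fun x y => ∏ i, M i (x i) (y i)

theorem piKron_mul [DecidableEq ι] [Fintype κ] [CommSemiring R] (M N : ι → Matrix κ κ R) :
    piKron M * piKron N = piKron (M * N) := by
  ext x y
  simp only [mul_apply, piKron, Pi.mul_apply, Finset.prod_univ_sum, Fintype.piFinset_univ,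
    Finset.prod_mul_distrib]

theorem piKron_one [DecidableEq κ] [CommMonoidWithZero R] :
    piKron (1 : ι → Matrix κ κ R) = 1 := by
  ext x y
  simp only [piKron, Pi.one_apply, one_apply, Finset.prod_boole, Finset.mem_univ, true_imp_iff,
    funext_iff]

theorem piKron_smul [CommMonoid R] (c : ι → R) (M : ι → Matrix κ κ R) :
    piKron (fun i => c i • M i) = (∏ i, c i) • piKron M := by
  ext x y
  simp only [piKron, smul_apply, smul_eq_mul, Finset.prod_mul_distrib]

theorem piKron_map {S : Type*} [CommSemiring R] [CommSemiring S] (f : R →+* S)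
    (M : ι → Matrix κ κ R) : (piKron M).map f = piKron (fun i => (M i).map f) := by
  ext x y
  simp only [map_apply, piKron, map_prod]

theorem trace_piKron [DecidableEq ι] [Fintype κ] [CommSemiring R] (M : ι → Matrix κ κ R) :
    (piKron M).trace = ∏ i, (M i).trace := by
  simp only [trace, diag, piKron, Finset.prod_univ_sum, Fintype.piFinset_univ]

end PiKron

section FixedVectors

variable {K N : Type*} [Field K] [CharZero K] [Fintype N] [DecidableEq N]

theorem exists_eq_smul_of_isIdempotentElem {P : Matrix N N K} (hP : IsIdempotentElem P)
    (htr : P.trace = 1) {v w : N → K} (hv : P *ᵥ v = v) (hw : P *ᵥ w = w) (hv0 : v ≠ 0) :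
    ∃ u : K, w = u • v := by
  obtain ⟨p, hp⟩ := (LinearMap.isProj_iff_isIdempotentElem (toLin' P)).2
    (by rw [IsIdempotentElem, Module.End.mul_eq_comp, ← toLin'_mul, hP.eq])
  have hrank : Module.finrank K p = 1 := by
    have := hp.trace
    rw [LinearMap.trace_eq_matrix_trace K (Pi.basisFun K N), LinearMap.toMatrix_eq_toMatrix',
      LinearMap.toMatrix'_toLin', htr] at this
    exact_mod_cast this.symm
  have hmem : ∀ x : N → K, P *ᵥ x = x → x ∈ p := fun x hx => by
    simpa [hx] using hp.map_mem x
  have hspan : Submodule.span K {v} = p :=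
    Submodule.eq_of_le_of_finrank_le ((Submodule.span_singleton_le_iff_mem _ _).2 (hmem v hv))
      (by rw [hrank, finrank_span_singleton hv0])
  obtain ⟨u, hu⟩ := Submodule.mem_span_singleton.1 (hspan ▸ hmem w hw)
  exact ⟨u, hu.symm⟩

theorem exists_eq_smul_of_forall_mulVec_eq {T : Finset (Matrix N N K)}
    (hmul : ∀ A ∈ T, ∀ B ∈ T, A * B ∈ T) (hsq : ∀ A ∈ T, A * A = 1)
    (htr : (T.card : K)⁻¹ * ∑ A ∈ T, A.trace = 1) {v w : N → K} (hv : ∀ A ∈ T, A *ᵥ v = v)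
    (hw : ∀ A ∈ T, A *ᵥ w = w) (hv0 : v ≠ 0) : ∃ u : K, w = u • v := by
  have hcard : (T.card : K) ≠ 0 := fun h => by simp [h] at htr
  set P := (T.card : K)⁻¹ • ∑ A ∈ T, A
  have hfix : ∀ x : N → K, (∀ A ∈ T, A *ᵥ x = x) → P *ᵥ x = x := fun x hx => by
    rw [smul_mulVec, sum_mulVec, Finset.sum_congr rfl hx, Finset.inv_card_smul_sum_const hcard]
  have hAP : ∀ A ∈ T, A * P = P := fun A hA => by
    rw [Matrix.mul_smul, mul_sum_eq_sum_of_mul_self_eq_one hmul hsq hA]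
  have hidem : IsIdempotentElem P := by
    rw [IsIdempotentElem, smul_mul_assoc, Finset.sum_mul, Finset.sum_congr rfl hAP,
      Finset.inv_card_smul_sum_const hcard]
  exact exists_eq_smul_of_isIdempotentElem hidem (by rwa [trace_smul, trace_sum, smul_eq_mul])
    (hfix v hv) (hfix w hw) hv0

end FixedVectors

theorem norm_eq_one_of_conj_eq_smul_mulVec {N : Type*} [Fintype N] [DecidableEq N]
    {M : Matrix N N ℂ} (hM : M.map (starRingEnd ℂ) = M) (hMM : M * M = 1) {v : N → ℂ}
    (hv : v ≠ 0) {u : ℂ} (h : starRingEnd ℂ ∘ v = u • M *ᵥ v) : ‖u‖ = 1 := by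
  have hvv : (starRingEnd ℂ u * u) • v = (1 : ℂ) • v := by
    calc (starRingEnd ℂ u * u) • v = starRingEnd ℂ u • M *ᵥ (u • M *ᵥ v) := by
          rw [mulVec_smul, mulVec_mulVec, hMM, one_mulVec, smul_smul]
      _ = starRingEnd ℂ u • M *ᵥ (starRingEnd ℂ ∘ v) := by rw [h]
      _ = starRingEnd ℂ u • starRingEnd ℂ ∘ (M *ᵥ v) := by rw [RingHom.comp_mulVec, hM]
      _ = starRingEnd ℂ ∘ (u • M *ᵥ v) := funext fun x => (map_mul _ _ _).symm
      _ = (1 : ℂ) • v := by rw [← h, one_smul]; ext x; simp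
  have hu : (‖u‖ : ℂ) ^ 2 = 1 := by rw [← Complex.conj_mul', smul_left_injective ℂ hv hvv]
  exact (pow_eq_one_iff_of_nonneg (norm_nonneg u) two_ne_zero).1 (by exact_mod_cast hu)

end Matrix

noncomputable def signChar : AddChar (ZMod 2) ℂ :=
  AddChar.zmodChar 2 (by norm_num : (-1 : ℂ) ^ 2 = 1)

@[simp] theorem signChar_zero : signChar 0 = 1 := signChar.map_zero_eq_one

@[simp] theorem signChar_one : signChar 1 = -1 := by
  rw [signChar, AddChar.zmodChar_apply, ZMod.val_one, pow_one]

theorem signChar_injective : Function.Injective signChar := by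
  intro s t h
  have : ∀ s : ZMod 2, s = 0 ∨ s = 1 := by decide
  rcases this s with rfl | rfl <;> rcases this t with rfl | rfl <;> first | rfl | norm_num at h

-- The labels `0, 1, 2, 3` stand for `I, X, Y, Z`, so multiplying Pauli matrices XORs their labels.
-- `xBit` marks the bit flips `X, Y`; `yBit` marks `Y`, the only Pauli matrix with non-real entries.
def mulPhase : Fin 4 → Fin 4 → ℂ :=
  ![![1, 1, 1, 1], ![1, 1, Complex.I, -Complex.I], ![1, -Complex.I, 1, Complex.I],
    ![1, Complex.I, -Complex.I, 1]]

def xBit : Fin 4 → ZMod 2 := ![0, 1, 1, 0]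

def yBit : Fin 4 → ZMod 2 := ![0, 0, 1, 0]

def zLabel (c : ZMod 2) : Fin 4 := if c = 0 then 0 else 3

theorem pauli_mul_pauli (k l : Fin 4) : pauli k * pauli l = mulPhase k l • pauli (k ^^^ l) := by
  fin_cases k <;> fin_cases l <;> ext a b <;> fin_cases a <;> fin_cases b <;>
    simp [pauli, mulPhase, mul_apply, Fin.sum_univ_two, one_apply]

theorem pauli_mul_self (k : Fin 4) : pauli k * pauli k = 1 := by
  fin_cases k <;> ext a b <;> fin_cases a <;> fin_cases b <;>
    simp [pauli, mul_apply, Fin.sum_univ_two, one_apply]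

theorem map_conj_pauli (k : Fin 4) :
    (pauli k).map (starRingEnd ℂ) = signChar (yBit k) • pauli k := by
  fin_cases k <;> ext a b <;> fin_cases a <;> fin_cases b <;> simp [pauli, yBit]

theorem trace_pauli_eq_zero {k : Fin 4} (hk : k ≠ 0) : (pauli k).trace = 0 := by
  fin_cases k <;> simp_all [pauli, trace, Fin.sum_univ_two]

theorem pauli_zLabel_mul_mul (c : ZMod 2) (k : Fin 4) :
    pauli (zLabel c) * pauli k * pauli (zLabel c) = signChar (c * xBit k) • pauli k := by
  have : ∀ s : ZMod 2, s = 0 ∨ s = 1 := by decide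
  rcases this c with rfl | rfl <;> fin_cases k <;> ext a b <;> fin_cases a <;> fin_cases b <;>
    simp [pauli, zLabel, xBit, mul_apply, Fin.sum_univ_two, one_apply]

theorem xBit_xor (k l : Fin 4) : xBit (k ^^^ l) = xBit k + xBit l := by
  revert k l; decide

theorem yBit_eq_zero_of_xBit_eq_zero {k : Fin 4} (hk : xBit k = 0) : yBit k = 0 := by
  revert k; decide

theorem yBit_zLabel (c : ZMod 2) : yBit (zLabel c) = 0 := by
  revert c; decide

section PauliOp

variable {n : ℕ}

def xPart (f : Fin n → Fin 4) : Fin n → ZMod 2 := fun i => xBit (f i)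

def yCount (f : Fin n → Fin 4) : ZMod 2 := ∑ i, yBit (f i)

theorem pauliOp_eq_piKron (f : Fin n → Fin 4) : pauliOp f = piKron (pauli ∘ f) := rfl

theorem pauliOp_zero : pauliOp (0 : Fin n → Fin 4) = 1 := by
  rw [pauliOp_eq_piKron, ← piKron_one]
  rfl

theorem pauliOp_mul (f g : Fin n → Fin 4) :
    pauliOp f * pauliOp g = (∏ i, mulPhase (f i) (g i)) • pauliOp (fun i => f i ^^^ g i) := by
  simp only [pauliOp_eq_piKron, piKron_mul, ← piKron_smul]
  congr 1
  ext1 i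
  exact pauli_mul_pauli (f i) (g i)

theorem pauliOp_mul_self (f : Fin n → Fin 4) : pauliOp f * pauliOp f = 1 := by
  rw [pauliOp_eq_piKron, piKron_mul, ← piKron_one]
  congr 1
  ext1 i
  exact pauli_mul_self (f i)

theorem map_conj_pauliOp (f : Fin n → Fin 4) :
    (pauliOp f).map (starRingEnd ℂ) = signChar (yCount f) • pauliOp f := by
  simp only [pauliOp_eq_piKron, piKron_map, Function.comp_apply, map_conj_pauli, piKron_smul,
    yCount, AddChar.map_sum_eq_prod]
  rfl

theorem trace_pauliOp_eq_zero {f : Fin n → Fin 4} (hf : f ≠ 0) : (pauliOp f).trace = 0 := by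
  obtain ⟨i, hi⟩ := Function.ne_iff.1 hf
  rw [pauliOp_eq_piKron, trace_piKron]
  exact Finset.prod_eq_zero (Finset.mem_univ i) (trace_pauli_eq_zero hi)

theorem pauliOp_zLabel_mul_mul (a : Fin n → ZMod 2) (f : Fin n → Fin 4) :
    pauliOp (zLabel ∘ a) * pauliOp f * pauliOp (zLabel ∘ a) =
      signChar (a ⬝ᵥ xPart f) • pauliOp f := by
  simp only [pauliOp_eq_piKron, piKron_mul, dotProduct, xPart, AddChar.map_sum_eq_prod,
    ← piKron_smul]
  congr 1
  ext1 i
  exact pauli_zLabel_mul_mul (a i) (f i)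

theorem map_conj_pauliOp_zLabel (a : Fin n → ZMod 2) :
    (pauliOp (zLabel ∘ a)).map (starRingEnd ℂ) = pauliOp (zLabel ∘ a) := by
  have hy : yCount (zLabel ∘ a) = 0 := Finset.sum_eq_zero fun i _ => yBit_zLabel (a i)
  rw [map_conj_pauliOp, hy, signChar_zero, one_smul]

def IsSignedPauliSet (S : Set (Matrix (Fin n → Fin 2) (Fin n → Fin 2) ℂ)) : Prop :=
  ∀ A ∈ S, ∃ f : Fin n → Fin 4, A = pauliOp f ∨ A = -pauliOp f

def pauliLabels (S : Set (Matrix (Fin n → Fin 2) (Fin n → Fin 2) ℂ)) : Set (Fin n → Fin 4) :=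
  {f | ∃ d : ℂ, d • pauliOp f ∈ S}

end PauliOp

namespace IsSignedPauliSet

variable {n : ℕ} {S : Set (Matrix (Fin n → Fin 2) (Fin n → Fin 2) ℂ)}

theorem mul_self_eq_one (hS : IsSignedPauliSet S) {A : Matrix (Fin n → Fin 2) (Fin n → Fin 2) ℂ}
    (hA : A ∈ S) : A * A = 1 := by
  obtain ⟨f, rfl | rfl⟩ := hS A hA
  · exact pauliOp_mul_self f
  · rw [neg_mul_neg, pauliOp_mul_self]

theorem eq_one_or_eq_neg_one_of_smul_pauliOp_mem (hS : IsSignedPauliSet S) {d : ℂ}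
    {f : Fin n → Fin 4} (h : d • pauliOp f ∈ S) : d = 1 ∨ d = -1 := by
  have hsq := hS.mul_self_eq_one h
  rw [smul_mul_smul_comm, pauliOp_mul_self] at hsq
  have h00 := congrFun₂ hsq 0 0
  simp only [Matrix.smul_apply, one_apply_eq, smul_eq_mul, mul_one] at h00
  exact mul_self_eq_one_iff.1 h00

theorem map_conj_of_smul_pauliOp_mem (hS : IsSignedPauliSet S) {d : ℂ} {f : Fin n → Fin 4}
    (h : d • pauliOp f ∈ S) :
    (d • pauliOp f).map (starRingEnd ℂ) = signChar (yCount f) • d • pauliOp f := by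
  have hd : starRingEnd ℂ d = d := by
    rcases hS.eq_one_or_eq_neg_one_of_smul_pauliOp_mem h with rfl | rfl <;> simp
  rw [Matrix.map_smul' _ _ _ (map_mul _), hd, map_conj_pauliOp, smul_comm]

theorem xor_mem_pauliLabels (hS : IsSignedPauliSet S) (hmul : ∀ A ∈ S, ∀ B ∈ S, A * B ∈ S)
    {f g : Fin n → Fin 4} (hf : f ∈ pauliLabels S) (hg : g ∈ pauliLabels S) :
    (fun i => f i ^^^ g i) ∈ pauliLabels S ∧
      yCount (fun i => f i ^^^ g i) = yCount f + yCount g := by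
  obtain ⟨d, hd⟩ := hf
  obtain ⟨e, he⟩ := hg
  set c := d * e * ∏ i, mulPhase (f i) (g i)
  have hprod : d • pauliOp f * e • pauliOp g = c • pauliOp (fun i => f i ^^^ g i) := by
    rw [smul_mul_smul, pauliOp_mul, smul_smul]
  have hmem := hmul _ hd _ he
  refine ⟨⟨c, hprod ▸ hmem⟩, signChar_injective ?_⟩
  have hne : d • pauliOp f * e • pauliOp g ≠ 0 := fun h0 => by
    simpa [h0] using hS.mul_self_eq_one hmem
  apply smul_left_injective ℂ hne
  calc signChar (yCount fun i => f i ^^^ g i) • (d • pauliOp f * e • pauliOp g)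
      = (d • pauliOp f * e • pauliOp g).map (starRingEnd ℂ) := by
        rw [hprod, hS.map_conj_of_smul_pauliOp_mem (hprod ▸ hmem)]
    _ = signChar (yCount f + yCount g) • (d • pauliOp f * e • pauliOp g) := by
        rw [Matrix.map_mul, hS.map_conj_of_smul_pauliOp_mem hd,
          hS.map_conj_of_smul_pauliOp_mem he, smul_mul_smul_comm, AddChar.map_add_eq_mul]

theorem exists_dotProduct_xPart_eq_yCount (hS : IsSignedPauliSet S) (hone : 1 ∈ S)
    (hmul : ∀ A ∈ S, ∀ B ∈ S, A * B ∈ S) :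
    ∃ a : Fin n → ZMod 2, ∀ f ∈ pauliLabels S, a ⬝ᵥ xPart f = yCount f := by
  have hzero : ((0 : Fin n → ZMod 2), (0 : ZMod 2)) = (xPart 0, yCount 0) :=
    Prod.ext rfl (Finset.sum_eq_zero fun _ _ => rfl : yCount (0 : Fin n → Fin 4) = 0).symm
  have h0 : (0 : Fin n → Fin 4) ∈ pauliLabels S := ⟨1, by rwa [one_smul, pauliOp_zero]⟩
  let W : Submodule (ZMod 2) ((Fin n → ZMod 2) × ZMod 2) :=
    { carrier := {p | ∃ f ∈ pauliLabels S, (xPart f, yCount f) = p}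
      add_mem' := by
        rintro _ _ ⟨f, hf, rfl⟩ ⟨g, hg, rfl⟩
        obtain ⟨hfg, hy⟩ := hS.xor_mem_pauliLabels hmul hf hg
        exact ⟨_, hfg, Prod.ext (funext fun i => xBit_xor (f i) (g i)) hy⟩
      zero_mem' := ⟨0, h0, hzero.symm⟩
      smul_mem' := by
        rintro c _ ⟨f, hf, rfl⟩
        rcases (by decide : ∀ s : ZMod 2, s = 0 ∨ s = 1) c with rfl | rfl
        · exact ⟨0, h0, by rw [zero_smul, ← hzero]; rfl⟩
        · exact ⟨f, hf, (one_smul _ _).symm⟩ }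
  obtain ⟨φ, hφ⟩ := W.exists_linearMap_apply_fst_eq_snd <| by
    rintro _ ⟨f, -, rfl⟩ hx
    show yCount f = 0
    exact Finset.sum_eq_zero fun i _ => yBit_eq_zero_of_xBit_eq_zero (congrFun hx i)
  refine ⟨fun i => φ fun j => if i = j then 1 else 0, fun f hf => ?_⟩
  have hφf : φ (xPart f) = yCount f := hφ _ ⟨f, hf, rfl⟩
  rw [← hφf, LinearMap.pi_apply_eq_sum_univ φ]
  simp only [dotProduct, smul_eq_mul, mul_comm]

theorem exists_pauliOp_zLabel_mul_mul_eq_map_conj (hS : IsSignedPauliSet S) (hone : 1 ∈ S)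
    (hmul : ∀ A ∈ S, ∀ B ∈ S, A * B ∈ S) :
    ∃ a : Fin n → ZMod 2, ∀ A ∈ S,
      pauliOp (zLabel ∘ a) * A * pauliOp (zLabel ∘ a) = A.map (starRingEnd ℂ) := by
  obtain ⟨a, ha⟩ := hS.exists_dotProduct_xPart_eq_yCount hone hmul
  refine ⟨a, fun A hA => ?_⟩
  obtain ⟨d, f, rfl⟩ : ∃ (d : ℂ) (f : Fin n → Fin 4), A = d • pauliOp f := by
    obtain ⟨f, rfl | rfl⟩ := hS A hA
    exacts [⟨1, f, (one_smul _ _).symm⟩, ⟨-1, f, (neg_one_smul _ _).symm⟩]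
  rw [hS.map_conj_of_smul_pauliOp_mem hA, ← ha f ⟨d, hA⟩, Matrix.mul_smul, smul_mul_assoc,
    pauliOp_zLabel_mul_mul, smul_comm]

theorem sum_trace_eq_two_pow (hS : IsSignedPauliSet S) (hone : 1 ∈ S) (hneg : -1 ∉ S)
    (hfin : S.Finite) : ∑ A ∈ hfin.toFinset, A.trace = 2 ^ n := by
  rw [Finset.sum_eq_single_of_mem 1 (hfin.mem_toFinset.2 hone)]
  · simp [trace_one]
  intro A hA hA1
  rw [Set.Finite.mem_toFinset] at hA
  obtain ⟨f, rfl | rfl⟩ := hS A hA <;> rcases eq_or_ne f 0 with rfl | hf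
  · exact absurd pauliOp_zero hA1
  · exact trace_pauliOp_eq_zero hf
  · exact absurd (pauliOp_zero ▸ hA) hneg
  · rw [trace_neg, trace_pauliOp_eq_zero hf, neg_zero]

end IsSignedPauliSet

theorem stabilizer_state_conj_general {n : ℕ}
    (S : Set (Matrix (Fin n → Fin 2) (Fin n → Fin 2) ℂ))
    (hSsub : ∀ A ∈ S, ∃ f : Fin n → Fin 4, A = pauliOp f ∨ A = -pauliOp f)
    (hone : (1 : Matrix (Fin n → Fin 2) (Fin n → Fin 2) ℂ) ∈ S)
    (hmul : ∀ A ∈ S, ∀ B ∈ S, A * B ∈ S)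
    (hneg : (-1 : Matrix (Fin n → Fin 2) (Fin n → Fin 2) ℂ) ∉ S)
    (hcard : S.ncard = 2 ^ n)
    (ψ : (Fin n → Fin 2) → ℂ)
    (hunit : star ψ ⬝ᵥ ψ = 1)
    (hstab : ∀ A ∈ S, A.mulVec ψ = ψ) :
    ∃ (g : Fin n → Fin 4) (u : ℂ),
      (∀ i, g i = 0 ∨ g i = 3) ∧ ‖u‖ = 1 ∧
      (fun x => starRingEnd ℂ (ψ x)) = u • (pauliOp g).mulVec ψ := by
  have hS : IsSignedPauliSet S := hSsub
  have hfin : S.Finite := Set.finite_of_ncard_pos (by rw [hcard]; positivity)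
  have hT : ∀ A, A ∈ hfin.toFinset ↔ A ∈ S := fun A => hfin.mem_toFinset
  have hψ0 : ψ ≠ 0 := by rintro rfl; simp at hunit
  obtain ⟨a, ha⟩ := hS.exists_pauliOp_zLabel_mul_mul_eq_map_conj hone hmul
  set ζ := pauliOp (zLabel ∘ a)
  have hζζ : ζ * ζ = 1 := pauliOp_mul_self _
  have hfix : ∀ A ∈ S, A *ᵥ ζ *ᵥ (starRingEnd ℂ ∘ ψ) = ζ *ᵥ (starRingEnd ℂ ∘ ψ) :=
    fun A hA => by
      have hAζ : A * ζ = ζ * A.map (starRingEnd ℂ) := by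
        rw [← ha A hA, ← mul_assoc, ← mul_assoc, hζζ, one_mul]
      rw [mulVec_mulVec, hAζ, ← mulVec_mulVec, ← RingHom.comp_mulVec, hstab A hA]
  obtain ⟨u, hu⟩ := exists_eq_smul_of_forall_mulVec_eq (T := hfin.toFinset)
    (by simpa only [hT] using hmul) (by simpa only [hT] using fun A => hS.mul_self_eq_one)
    (by rw [hS.sum_trace_eq_two_pow hone hneg hfin, ← Set.ncard_eq_toFinset_card S hfin, hcard]
        simp)
    (by simpa only [hT] using hstab) (by simpa only [hT] using hfix) hψ0
  have hconj : starRingEnd ℂ ∘ ψ = u • ζ *ᵥ ψ := by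
    rw [← mulVec_smul, ← hu, mulVec_mulVec, hζζ, one_mulVec]
  exact ⟨zLabel ∘ a, u, fun i => ite_eq_or_eq _ _ _,
    norm_eq_one_of_conj_eq_smul_mulVec (map_conj_pauliOp_zLabel a) hζζ hψ0 hconj, hconj⟩

/-- the complex conjugate of any stabilizer state |S⟩ equals (up to a
global phase) ζ|S⟩ for some Pauli operator ζ that is a tensor product of I's and σ_z's. -/
theorem stabilizer_state_conj {n : ℕ}
    (S : Set (Matrix (Fin n → Fin 2) (Fin n → Fin 2) ℂ))
    (hSsub : ∀ A ∈ S, ∃ f : Fin n → Fin 4, A = pauliOp f ∨ A = -pauliOp f)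
    (hone : (1 : Matrix (Fin n → Fin 2) (Fin n → Fin 2) ℂ) ∈ S)
    (hmul : ∀ A ∈ S, ∀ B ∈ S, A * B ∈ S)
    (habel : ∀ A ∈ S, ∀ B ∈ S, A * B = B * A)
    (hneg : (-1 : Matrix (Fin n → Fin 2) (Fin n → Fin 2) ℂ) ∉ S)
    (hcard : S.ncard = 2 ^ n)
    (ψ : (Fin n → Fin 2) → ℂ)
    (hunit : star ψ ⬝ᵥ ψ = 1)
    (hstab : ∀ A ∈ S, A.mulVec ψ = ψ) :
    ∃ (g : Fin n → Fin 4) (u : ℂ),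
      (∀ i, g i = 0 ∨ g i = 3) ∧ ‖u‖ = 1 ∧
      (fun x => starRingEnd ℂ (ψ x)) = u • (pauliOp g).mulVec ψ :=
  stabilizer_state_conj_general S hSsub hone hmul hneg hcard ψ hunit hstab
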